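/- Proportionality of the cyclic unit-quota fractional allocation: fix n agents with additive valuations over m ≥ n goods and any ordering π. For each cyclic shift j, run the picking order of π^{(j)} where each of the first n−1 agents picks her most preferred remaining good (ties broken consistently by a fixed strict order for each agent) and the last agent receives all remaining goods. Then for every agent i, the sum over the n cyclic shifts of the value agent i receives is at least v_i(M); hence the average value over a uniformly random shift is at least v_i(M)/n. -/

import Mathlib

set_option linter.unusedSectionVars false


open Finset

variable {α : Type*} [DecidableEq α] [Nonempty α]

/-- The most preferred good of `R` according to the (rank) function `f`
(smaller rank means more preferred); arbitrary if `R` is empty. -/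
noncomputable def fav (f : α → ℕ) (R : Finset α) : α :=
  if h : R.Nonempty then (R.exists_min_image f h).choose else Classical.arbitrary α

/-- The sequence of goods picked when the agents in the list pick in turn, each
taking her single most preferred remaining good. `pref a` is the rank function of
agent `a` (smaller is better). -/
noncomputable def pickSeq {ι : Type*} (pref : ι → α → ℕ) : List ι → Finset α → List α
  | [], _ => []
  | a :: rest, R =>
    if R.Nonempty then
      fav (pref a) R :: pickSeq pref rest (R.erase (fav (pref a) R))
    else []

/-- The list of goods picked by the first `n−1` agents in the cyclic shift of the
ordering `π` starting at position `j` (agent at position `j` first, wrapping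
cyclically). -/
noncomputable def firstPicks {n : ℕ} [NeZero n] (pref : Fin n → α → ℕ)
    (π : Equiv.Perm (Fin n)) (M : Finset α) (j : Fin n) : List α :=
  pickSeq pref ((List.ofFn fun t : Fin n => π.symm (j + t)).take (n - 1)) M

/-- The value received by agent `i` in the unit-quota allocation for the cyclic shift
starting at position `j`: if `i` is last (i.e. `j = π i + 1`) she receives all goods
not picked by the first `n−1` agents; otherwise she receives the good she picked,
which is the entry of the pick list at her (0-indexed) position `π i − j`. -/
noncomputable def gained {n : ℕ} [NeZero n] (v : Fin n → α → ℝ) (pref : Fin n → α → ℕ)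
    (π : Equiv.Perm (Fin n)) (M : Finset α) (i j : Fin n) : ℝ :=
  if j = π i + 1 then ∑ x ∈ M \ (firstPicks pref π M j).toFinset, v i x
  else v i ((firstPicks pref π M j).getD ((π i - j : Fin n) : ℕ) (Classical.arbitrary α))

lemma fav_mem (f : α → ℕ) {R : Finset α} (h : R.Nonempty) : fav f R ∈ R := by
  rw [fav, dif_pos h]
  exact (R.exists_min_image f h).choose_spec.1

lemma fav_min (f : α → ℕ) {R : Finset α} (h : R.Nonempty) : ∀ x ∈ R, f (fav f R) ≤ f x := by
  rw [fav, dif_pos h]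
  exact (R.exists_min_image f h).choose_spec.2

lemma pickSeq_subset {ι : Type*} (pref : ι → α → ℕ) :
    ∀ (l : List ι) (R : Finset α), ∀ x ∈ pickSeq pref l R, x ∈ R := by
  intro l
  induction l with
  | nil => intro R x hx; simp [pickSeq] at hx
  | cons a rest ih =>
    intro R x hx
    rw [pickSeq] at hx
    by_cases h : R.Nonempty
    · rw [if_pos h] at hx
      rcases List.mem_cons.1 hx with h1 | h1
      · exact h1 ▸ fav_mem _ h
      · exact R.erase_subset _ (ih _ _ h1)
    · rw [if_neg h] at hx; simp at hx

lemma pickSeq_nodup {ι : Type*} (pref : ι → α → ℕ) :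
    ∀ (l : List ι) (R : Finset α), (pickSeq pref l R).Nodup := by
  intro l
  induction l with
  | nil => intro R; simp [pickSeq]
  | cons a rest ih =>
    intro R
    rw [pickSeq]
    split
    · refine List.nodup_cons.2 ⟨fun hmem => ?_, ih _⟩
      have := pickSeq_subset pref rest _ _ hmem
      exact (R.notMem_erase _) this
    · simp

lemma pickSeq_length {ι : Type*} (pref : ι → α → ℕ) :
    ∀ (l : List ι) (R : Finset α), (pickSeq pref l R).length = min l.length R.card := by
  intro l
  induction l with
  | nil => intro R; simp [pickSeq]
  | cons a rest ih =>
    intro R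
    rw [pickSeq]
    by_cases h : R.Nonempty
    · rw [if_pos h]
      simp only [List.length_cons, ih, Finset.card_erase_of_mem (fav_mem _ h)]
      have hR : 1 ≤ R.card := Finset.card_pos.2 h
      omega
    · rw [if_neg h]
      have : R.card = 0 := by
        rw [Finset.card_eq_zero]
        exact Finset.not_nonempty_iff_eq_empty.1 h
      simp [this]

lemma pickSeq_getD {ι : Type*} (pref : ι → α → ℕ) (d : α) :
    ∀ (l : List ι) (R : Finset α) (k : ℕ) (hk : k < l.length), k < R.card →
    ∃ R' : Finset α, R' ⊆ R ∧ R.card ≤ R'.card + k ∧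
      (pickSeq pref l R).getD k d ∈ R' ∧
      ∀ x ∈ R', pref (l.get ⟨k, hk⟩) ((pickSeq pref l R).getD k d)
        ≤ pref (l.get ⟨k, hk⟩) x := by
  intro l
  induction l with
  | nil => intro R k hk; simp at hk
  | cons a rest ih =>
    intro R k hk hk'
    have hR : R.Nonempty := Finset.card_pos.1 (by omega)
    rw [pickSeq, if_pos hR]
    match k with
    | 0 =>
      exact ⟨R, le_refl R, by omega, by simpa using fav_mem _ hR,
        by simpa using fav_min (pref a) hR⟩
    | k + 1 =>
      have hk2 : k < (R.erase (fav (pref a) R)).card := by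
        rw [Finset.card_erase_of_mem (fav_mem _ hR)]; omega
      obtain ⟨R', h1, h2, h3, h4⟩ := ih (R.erase (fav (pref a) R)) k
        (by simpa using Nat.lt_of_succ_lt_succ hk) hk2
      refine ⟨R', h1.trans (R.erase_subset _), ?_, by simpa using h3, by simpa using h4⟩
      rw [Finset.card_erase_of_mem (fav_mem _ hR)] at h2
      omega



section sorted
variable (f : α → ℕ) (hf : Function.Injective f) (v : α → ℝ) (M : Finset α)
  (L : List α) (hnd : L.Nodup) (hmem : ∀ x, x ∈ L ↔ x ∈ M)
  (hsort : L.Pairwise (fun x y => f x ≤ f y)) (hlen : L.length = M.card)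
  (d : α)

include hnd hmem hsort hlen

-- the first k+1 elements of L all have f-rank ≤ rank of L[k]
lemma filter_card_ge (k : ℕ) (hk : k < M.card) :
    k + 1 ≤ (M.filter (fun y => f y ≤ f (L.getD k d))).card := by
  have hkL : k < L.length := hlen ▸ hk
  have hsub : (L.take (k+1)).toFinset ⊆ M.filter (fun y => f y ≤ f (L.getD k d)) := by
    intro x hx
    rw [List.mem_toFinset] at hx
    obtain ⟨b, hb, hbx⟩ := List.mem_take_iff_getElem.1 hx
    have hb' : b < k + 1 := by simp at hb; omega
    rw [List.getD_eq_getElem L d hkL]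
    rw [Finset.mem_filter]
    constructor
    · rw [← hmem, ← hbx]; exact List.getElem_mem _
    · rcases Nat.lt_or_ge b k with h | h
      · have := List.pairwise_iff_getElem.1 hsort b k (by omega) hkL h
        rw [hbx] at this; exact this
      · have : b = k := by omega
        subst this; rw [hbx]
  have hcard : (L.take (k+1)).toFinset.card = k + 1 := by
    rw [List.toFinset_card_of_nodup (hnd.sublist (List.take_sublist _ _))]
    simp [hkL]
  calc k + 1 = (L.take (k+1)).toFinset.card := hcard.symm
    _ ≤ _ := Finset.card_le_card hsub

include hf in
lemma pick_ge (hcons : ∀ x ∈ M, ∀ y ∈ M, f x < f y → v y ≤ v x)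
    (k : ℕ) (hk : k < M.card) (R' : Finset α) (hR'M : R' ⊆ M)
    (hcard : M.card ≤ R'.card + k) (g : α) (hg : g ∈ R')
    (hmin : ∀ x ∈ R', f g ≤ f x) :
    v (L.getD k d) ≤ v g := by
  set e := L.getD k d with he
  have heM : e ∈ M := by
    rw [← hmem, he, List.getD_eq_getElem L d (hlen ▸ hk)]
    exact List.getElem_mem _
  have hF := filter_card_ge f M L hnd hmem hsort hlen d k hk
  set F := M.filter (fun y => f y ≤ f e) with hFdef
  have hFM : F ⊆ M := Finset.filter_subset _ _
  have hinter : (R' ∩ F).Nonempty := by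
    rw [← Finset.card_pos]
    have h1 : (R' ∪ F) ⊆ M := Finset.union_subset hR'M hFM
    have h2 := Finset.card_le_card h1
    have h3 := Finset.card_union_add_card_inter R' F
    omega
  obtain ⟨x, hx⟩ := hinter
  rw [Finset.mem_inter] at hx
  have hxM : x ∈ M := hR'M hx.1
  have hfx : f x ≤ f e := (Finset.mem_filter.1 hx.2).2
  have h1 : v e ≤ v x := by
    rcases lt_or_eq_of_le hfx with h | h
    · exact hcons x hxM e heM h
    · rw [hf h]
  have h2 : v x ≤ v g := by
    rcases lt_or_eq_of_le (hmin x hx.1) with h | h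
    · exact hcons g (hR'M hg) x hxM h
    · rw [← hf h]
  linarith

-- f-ranks of take-set dominate the rest
lemma take_rank_le (s : ℕ) {x y : α} (hx : x ∈ (L.take s).toFinset)
    (hy : y ∈ M) (hyT : y ∉ (L.take s).toFinset) : f x ≤ f y := by
  rw [List.mem_toFinset] at hx
  obtain ⟨a, ha, hax⟩ := List.mem_take_iff_getElem.1 hx
  have hyL : y ∈ L := (hmem y).2 hy
  obtain ⟨b, hb, hby⟩ := List.getElem_of_mem hyL
  have hbs : s ≤ b := by
    by_contra h
    push_neg at h
    apply hyT
    rw [List.mem_toFinset]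
    exact List.mem_take_iff_getElem.2 ⟨b, by omega, by simpa [h] using hby⟩
  have hab : a < b := by omega
  have := List.pairwise_iff_getElem.1 hsort a b (by omega) hb hab
  rw [hax, hby] at this; exact this

lemma sum_range_eq_sum_take (s : ℕ) (hs : s ≤ M.card) :
    ∑ k ∈ Finset.range s, v (L.getD k d) = ∑ x ∈ (L.take s).toFinset, v x := by
  have hsL : s ≤ L.length := hlen ▸ hs
  refine Finset.sum_bij (fun k _ => L.getD k d) ?_ ?_ ?_ ?_
  · intro k hk
    rw [Finset.mem_range] at hk
    show L.getD k d ∈ (L.take s).toFinset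
    rw [List.mem_toFinset, List.getD_eq_getElem L d (by omega)]
    exact List.mem_take_iff_getElem.2 ⟨k, by omega, rfl⟩
  · intro a ha b hb hab
    rw [Finset.mem_range] at ha hb
    have hab' : L.getD a d = L.getD b d := hab
    rw [List.getD_eq_getElem L d (by omega), List.getD_eq_getElem L d (by omega)] at hab'
    exact (List.Nodup.getElem_inj_iff hnd).1 hab'
  · intro x hx
    rw [List.mem_toFinset] at hx
    obtain ⟨b, hb, hbx⟩ := List.mem_take_iff_getElem.1 hx
    have hbs : b < s := by
      rcases Nat.lt_or_ge b s with h | h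
      · exact h
      · simp at hb; omega
    exact ⟨b, Finset.mem_range.2 hbs, by
      show L.getD b d = x
      rw [List.getD_eq_getElem L d (by omega), hbx]⟩
  · intros; rfl

include hf in
lemma sum_dominance (hcons : ∀ x ∈ M, ∀ y ∈ M, f x < f y → v y ≤ v x)
    (s : ℕ) (hs : s ≤ M.card) (S : Finset α) (hS : S ⊆ M) (hcardS : S.card = s) :
    ∑ x ∈ S, v x ≤ ∑ k ∈ Finset.range s, v (L.getD k d) := by
  rw [sum_range_eq_sum_take f v M L hnd hmem hsort hlen d s hs]
  set T := (L.take s).toFinset with hT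
  have hTM : T ⊆ M := by
    intro x hx
    rw [hT, List.mem_toFinset] at hx
    exact (hmem x).1 (List.mem_of_mem_take hx)
  have hTcard : T.card = s := by
    rw [hT, List.toFinset_card_of_nodup (hnd.sublist (List.take_sublist _ _))]
    simp [hlen ▸ hs]
  have hsplit1 : ∑ x ∈ S, v x = ∑ x ∈ S ∩ T, v x + ∑ x ∈ S \ T, v x :=
    (Finset.sum_inter_add_sum_sdiff S T v).symm
  have hsplit2 : ∑ x ∈ T, v x = ∑ x ∈ T ∩ S, v x + ∑ x ∈ T \ S, v x :=
    (Finset.sum_inter_add_sum_sdiff T S v).symm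
  rw [hsplit1, hsplit2, Finset.inter_comm T S]
  have hcards : (S \ T).card = (T \ S).card := by
    have h1 := Finset.card_inter_add_card_sdiff S T
    have h2 := Finset.card_inter_add_card_sdiff T S
    rw [Finset.inter_comm T S] at h2
    omega
  rcases Finset.eq_empty_or_nonempty (S \ T) with h | h
  · rw [h]
    have : T \ S = ∅ := Finset.card_eq_zero.1 (by rw [← hcards, h]; simp)
    rw [this]
  · obtain ⟨y₀, hy₀mem, hy₀max⟩ := Finset.exists_max_image (S \ T) v h
    have key : ∀ x ∈ T \ S, ∀ y ∈ S \ T, v y ≤ v x := by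
      intro x hx y hy
      rw [Finset.mem_sdiff] at hx hy
      have hfle := take_rank_le f M L hnd hmem hsort hlen s hx.1 (hS hy.1) hy.2
      rcases lt_or_eq_of_le hfle with hlt | heq
      · exact hcons x (hTM hx.1) y (hS hy.1) hlt
      · rw [hf heq]
    have h1 : ∑ y ∈ S \ T, v y ≤ (S \ T).card • v y₀ :=
      Finset.sum_le_card_nsmul _ _ _ (fun y hy => hy₀max y hy)
    have h2 : (T \ S).card • v y₀ ≤ ∑ x ∈ T \ S, v x :=
      Finset.card_nsmul_le_sum _ _ _ (fun x hx => key x hx y₀ hy₀mem)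
    rw [hcards] at h1
    linarith
end sorted

/-- Proportionality of the cyclic unit-quota allocation: summing over the `n` cyclic
shifts, each agent receives total value at least `vᵢ(M)`; hence the average over a
uniformly random shift is at least `vᵢ(M)/n`. -/
theorem cyclic_unit_quota_proportional {n : ℕ} [NeZero n] (v : Fin n → α → ℝ)
    (pref : Fin n → α → ℕ) (π : Equiv.Perm (Fin n)) (M : Finset α)
    (hM : n ≤ M.card) (hv : ∀ i x, 0 ≤ v i x)
    (hinj : ∀ i, Function.Injective (pref i))
    (hcons : ∀ i, ∀ x ∈ M, ∀ y ∈ M, pref i x < pref i y → v i y ≤ v i x) :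
    ∀ i : Fin n,
      (∑ x ∈ M, v i x) ≤ (∑ j : Fin n, gained v pref π M i j) ∧
      (∑ x ∈ M, v i x) / (n : ℝ) ≤ (∑ j : Fin n, gained v pref π M i j) / (n : ℝ) := by
  obtain ⟨m, rfl⟩ := Nat.exists_eq_succ_of_ne_zero (NeZero.ne n)
  intro i
  open Fin.CommRing in
  have hmain : (∑ x ∈ M, v i x) ≤ (∑ j : Fin (m+1), gained v pref π M i j) := by
    set f := pref i with hfdef
    have hf : Function.Injective f := hinj i
    have hc : ∀ x ∈ M, ∀ y ∈ M, f x < f y → v i y ≤ v i x := hcons i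
    -- build the sorted list of M by f
    letI : DecidableRel (fun x y : α => f x ≤ f y) := fun x y => Nat.decLe _ _
    haveI htrans : IsTrans α (fun x y : α => f x ≤ f y) := ⟨fun a b c h1 h2 => le_trans h1 h2⟩
    haveI hanti : IsAntisymm α (fun x y : α => f x ≤ f y) :=
      ⟨fun a b h1 h2 => hf (le_antisymm h1 h2)⟩
    haveI htot : IsTotal α (fun x y : α => f x ≤ f y) := ⟨fun a b => le_total _ _⟩
    set L := M.sort (fun x y : α => f x ≤ f y) with hLdef
    have hnd : L.Nodup := M.sort_nodup _
    have hmem : ∀ x, x ∈ L ↔ x ∈ M := fun x => M.mem_sort _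
    have hsort : L.Pairwise (fun x y => f x ≤ f y) := M.pairwise_sort _
    have hlen : L.length = M.card := M.length_sort _
    set d := (Classical.arbitrary α) with hddef
    set j₀ : Fin (m+1) := π i + 1 with hj₀
    -- facts about the lists of agents
    have hl_len : ∀ j : Fin (m+1),
        ((List.ofFn fun t : Fin (m+1) => π.symm (j + t)).take ((m+1) - 1)).length = m := by
      intro j
      rw [List.length_take, List.length_ofFn]
      omega
    have hmM : m ≤ M.card := by omega
    -- the kth pick bound for j ≠ j₀
    have hk_lt : ∀ j : Fin (m+1), j ≠ j₀ → ((π i - j : Fin (m+1)) : ℕ) < m := by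
      intro j hj
      by_contra h
      push_neg at h
      have h1 : ((π i - j : Fin (m+1)) : ℕ) = m := by
        have := (π i - j).isLt; omega
      have h2 : π i - j = (-1 : Fin (m+1)) := by
        apply Fin.ext
        rw [h1, Fin.coe_neg_one]
      apply hj
      rw [hj₀]
      have := sub_eq_iff_eq_add.1 h2
      rw [this]; ring
    have hbound : ∀ j : Fin (m+1), j ≠ j₀ →
        v i (L.getD ((π i - j : Fin (m+1)) : ℕ) d) ≤ gained v pref π M i j := by
      intro j hj
      rw [gained, if_neg (by rw [← hj₀]; exact hj)]
      set k : ℕ := ((π i - j : Fin (m+1)) : ℕ) with hkdef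
      have hkm : k < m := hk_lt j hj
      set l := ((List.ofFn fun t : Fin (m+1) => π.symm (j + t)).take ((m+1) - 1)) with hldef
      have hkl : k < l.length := by rw [hl_len j]; exact hkm
      have hkMc : k < M.card := by omega
      obtain ⟨R', hR'M, hcard, hgmem, hgmin⟩ := pickSeq_getD pref d l M k hkl hkMc
      have hagent : l.get ⟨k, hkl⟩ = i := by
        have h1 : l.get ⟨k, hkl⟩ = l[k] := rfl
        have h2 : l[k] = (List.ofFn fun t : Fin (m+1) => π.symm (j + t))[k]'(by
            rw [List.length_ofFn]; omega) := List.getElem_take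
        rw [h1, h2, List.getElem_ofFn]
        have h3 : (⟨k, by omega⟩ : Fin (m+1)) = π i - j := by
          apply Fin.ext; simp [hkdef]
        rw [h3]
        have h4 : j + (π i - j) = π i := by ring
        rw [h4, Equiv.symm_apply_apply]
      rw [hagent] at hgmin
      have : firstPicks pref π M j = pickSeq pref l M := rfl
      rw [this]
      exact pick_ge f hf (v i) M L hnd hmem hsort hlen d hc k hkMc R' hR'M
        (by omega) _ hgmem hgmin
    -- reindex the sum over j ≠ j₀
    have hreindex : ∑ k ∈ Finset.range m, v i (L.getD k d)
        = ∑ j ∈ Finset.univ.erase j₀, v i (L.getD ((π i - j : Fin (m+1)) : ℕ) d) := by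
      refine (Finset.sum_nbij' (fun j => ((π i - j : Fin (m+1)) : ℕ))
        (fun k => π i - (k : Fin (m+1))) ?_ ?_ ?_ ?_ ?_).symm
      · intro j hj
        rw [Finset.mem_range]
        exact hk_lt j (Finset.ne_of_mem_erase hj)
      · intro k hk
        rw [Finset.mem_range] at hk
        refine Finset.mem_erase.2 ⟨?_, Finset.mem_univ _⟩
        intro h
        rw [hj₀] at h
        have h' : π i - (k : Fin (m+1)) = π i + 1 := h
        have h'' : π i + -(k : Fin (m+1)) = π i + 1 := by rw [← h']; ring
        have h2 : (k : Fin (m+1)) = -1 := neg_eq_iff_eq_neg.1 (add_left_cancel h'')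
        have := congrArg Fin.val h2
        rw [Fin.coe_neg_one, Fin.val_cast_of_lt (by omega)] at this
        omega
      · intro j hj
        rw [Fin.cast_val_eq_self, sub_sub_cancel]
      · intro k hk
        rw [Finset.mem_range] at hk
        rw [sub_sub_cancel, Fin.val_cast_of_lt (by omega)]
      · intro j hj; rfl
    -- the last-position bound
    have hlast : (∑ x ∈ M, v i x) - ∑ k ∈ Finset.range m, v i (L.getD k d)
        ≤ gained v pref π M i j₀ := by
      rw [gained, if_pos rfl]
      set P := firstPicks pref π M j₀ with hPdef
      have hPnd : P.Nodup := pickSeq_nodup pref _ _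
      have hPsub : P.toFinset ⊆ M := by
        intro x hx
        rw [List.mem_toFinset] at hx
        exact pickSeq_subset pref _ _ x hx
      have hPlen : P.length = m := by
        rw [hPdef, firstPicks, pickSeq_length, hl_len j₀]
        omega
      have hPcard : P.toFinset.card = m := by
        rw [List.toFinset_card_of_nodup hPnd, hPlen]
      rw [Finset.sum_sdiff_eq_sub hPsub]
      have := sum_dominance f hf (v i) M L hnd hmem hsort hlen d hc m hmM
        P.toFinset hPsub hPcard
      linarith
    -- combine
    have hsplit : (∑ j : Fin (m+1), gained v pref π M i j)
        = gained v pref π M i j₀ + ∑ j ∈ Finset.univ.erase j₀, gained v pref π M i j :=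
      (Finset.add_sum_erase _ _ (Finset.mem_univ j₀)).symm
    have herase : ∑ k ∈ Finset.range m, v i (L.getD k d)
        ≤ ∑ j ∈ Finset.univ.erase j₀, gained v pref π M i j := by
      rw [hreindex]
      exact Finset.sum_le_sum (fun j hj => hbound j (Finset.ne_of_mem_erase hj))
    rw [hsplit]
    linarith
  refine ⟨hmain, ?_⟩
  have hn : (0:ℝ) < (m+1 : ℕ) := by positivity
  exact div_le_div_of_nonneg_right hmain hn.le
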